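/- The array variate skew normal density of Equation (10) integrates to one (case i = 2): Let A₁ be an invertible real m×m matrix, A₂ an invertible real n×n matrix, and M, Δ real m×n matrices. Identify a point X of the space (Fin m × Fin n) → ℝ with the m×n matrix X' given by X' i j = X (i,j), and set W = A₁⁻¹ · (X' − M) · (A₂⁻¹)ᵀ. Then ∫ over X : (Fin m × Fin n) → ℝ (with respect to the product Lebesgue measure) of |det A₁|^(−n) · |det A₂|^(−m) · ∏_{i,j} ( φ(W i j) · Φ(Δ i j · W i j) ) dX = 2^(−mn). Equivalently, f(X) = 2^(mn) · φ(X; M, A₁, A₂) · ∏_{i,j} Φ(Δ i j · W i j) is a probability density. -/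

import Mathlib

/-!
Vectorising `X`, the map `X ↦ W = A₁⁻¹ (X - M) A₂⁻ᵀ` becomes `x ↦ (A₁⁻¹ ⊗ A₂⁻¹)(x - vec M)`, whose
linear part has determinant `(det A₁)⁻ⁿ (det A₂)⁻ᵐ`; the change of variables `X ↦ W` absorbs the
normalising constant and leaves the product of the `mn` one-dimensional integrals
`∫ φ(w) Φ(Δᵢⱼ w) dw`. Each equals `1/2`: as `φ` is even and `Φ(t) + Φ(-t) = 1`, the reflection
`w ↦ -w` turns it into `∫ φ(w) (1 - Φ(Δᵢⱼ w)) dw`.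
-/

open MeasureTheory Matrix

/-- The error function `erf t = (2/√π) ∫₀ᵗ exp(−s²) ds`. -/
noncomputable def erf (t : ℝ) : ℝ :=
  (2 / Real.sqrt Real.pi) * ∫ s in (0 : ℝ)..t, Real.exp (-s ^ 2)

/-- The standard normal probability density function. -/
noncomputable def stdNormalPdf (z : ℝ) : ℝ :=
  Real.exp (-z ^ 2 / 2) / Real.sqrt (2 * Real.pi)

/-- The standard normal cumulative distribution function. -/
noncomputable def stdNormalCdf (t : ℝ) : ℝ :=
  (1 + erf (t / Real.sqrt 2)) / 2

open Real Kronecker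

lemma continuous_erf : Continuous erf :=
  continuous_const.mul <| intervalIntegral.continuous_primitive
    (fun _ _ => (by fun_prop : Continuous fun s : ℝ => exp (-s ^ 2)).intervalIntegrable _ _) 0

lemma erf_neg (t : ℝ) : erf (-t) = -erf t := by
  have h := intervalIntegral.integral_comp_neg (a := 0) (b := -t) fun s => exp (-s ^ 2)
  simp only [neg_neg, neg_zero, neg_sq] at h
  rw [erf, erf, h, intervalIntegral.integral_symm, mul_neg]

lemma erf_nonneg {t : ℝ} (ht : 0 ≤ t) : 0 ≤ erf t :=
  mul_nonneg (by positivity) (intervalIntegral.integral_nonneg ht fun _ _ => (exp_pos _).le)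

lemma erf_le_one {t : ℝ} (ht : 0 ≤ t) : erf t ≤ 1 := by
  have hint : IntegrableOn (fun s : ℝ => exp (-s ^ 2)) (Set.Ioi 0) := by
    simpa using (integrable_exp_neg_mul_sq one_pos).integrableOn
  have hle : ∫ s in (0 : ℝ)..t, exp (-s ^ 2) ≤ √π / 2 := by
    rw [intervalIntegral.integral_of_le ht]
    calc ∫ s in Set.Ioc 0 t, exp (-s ^ 2) ≤ ∫ s in Set.Ioi 0, exp (-s ^ 2) :=
          setIntegral_mono_set hint (.of_forall fun _ => (exp_pos _).le)
            Set.Ioc_subset_Ioi_self.eventuallyLE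
      _ = √π / 2 := by simpa using integral_gaussian_Ioi 1
  have hπ : 0 < √π := sqrt_pos.2 pi_pos
  calc erf t ≤ 2 / √π * (√π / 2) := mul_le_mul_of_nonneg_left hle (by positivity)
    _ = 1 := by field_simp

lemma abs_erf_le_one (t : ℝ) : |erf t| ≤ 1 := by
  rcases le_total 0 t with ht | ht
  · exact abs_le.2 ⟨by linarith [erf_nonneg ht], erf_le_one ht⟩
  · have h := neg_nonneg.2 ht
    rw [← neg_neg t, erf_neg]
    exact abs_le.2 ⟨by linarith [erf_le_one h], by linarith [erf_nonneg h]⟩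

lemma continuous_stdNormalCdf : Continuous stdNormalCdf :=
  (continuous_const.add (continuous_erf.comp (continuous_id.div_const _))).div_const 2

lemma stdNormalCdf_add_stdNormalCdf_neg (t : ℝ) : stdNormalCdf t + stdNormalCdf (-t) = 1 := by
  rw [stdNormalCdf, stdNormalCdf, neg_div, erf_neg]
  ring

lemma abs_stdNormalCdf_le_one (t : ℝ) : |stdNormalCdf t| ≤ 1 := by
  obtain ⟨h₁, h₂⟩ := abs_le.1 (abs_erf_le_one (t / √2))
  rw [stdNormalCdf, abs_le]
  constructor <;> linarith

lemma stdNormalPdf_eq_gaussianPDFReal : stdNormalPdf = ProbabilityTheory.gaussianPDFReal 0 1 := by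
  ext x
  simp [stdNormalPdf, ProbabilityTheory.gaussianPDFReal, div_eq_inv_mul]

lemma stdNormalPdf_neg (x : ℝ) : stdNormalPdf (-x) = stdNormalPdf x := by
  rw [stdNormalPdf, stdNormalPdf, neg_sq]

lemma integrable_stdNormalPdf : Integrable stdNormalPdf :=
  stdNormalPdf_eq_gaussianPDFReal ▸ ProbabilityTheory.integrable_gaussianPDFReal 0 1

lemma integral_stdNormalPdf : ∫ x, stdNormalPdf x = 1 :=
  stdNormalPdf_eq_gaussianPDFReal ▸ ProbabilityTheory.integral_gaussianPDFReal_eq_one 0 one_ne_zero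

lemma integral_mul_comp_odd_eq_half {E : Type*} [MeasurableSpace E] [AddGroup E] [MeasurableNeg E]
    {μ : Measure E} [μ.IsNegInvariant] {f w : E → ℝ} {F : ℝ → ℝ}
    (hf : ∀ x, f (-x) = f x) (hF : ∀ t, F t + F (-t) = 1) (hw : ∀ x, w (-x) = -w x)
    (hfi : Integrable f μ) (hi : Integrable (fun x => f x * F (w x)) μ) :
    ∫ x, f x * F (w x) ∂μ = (∫ x, f x ∂μ) / 2 := by
  have hreflect : ∫ x, f x * F (w x) ∂μ = ∫ x, (f x - f x * F (w x)) ∂μ := by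
    rw [← integral_neg_eq_self]
    congr 1 with x
    rw [hf, hw]
    linear_combination f x * hF (w x)
  rw [integral_sub hfi hi] at hreflect
  linarith

lemma integral_stdNormalPdf_mul_stdNormalCdf (c : ℝ) :
    ∫ x, stdNormalPdf x * stdNormalCdf (c * x) = 1 / 2 := by
  have hi : Integrable fun x => stdNormalPdf x * stdNormalCdf (c * x) :=
    integrable_stdNormalPdf.mul_bdd
      (continuous_stdNormalCdf.comp (continuous_const_mul c)).aestronglyMeasurable
      (.of_forall fun x => abs_stdNormalCdf_le_one (c * x))
  rw [integral_mul_comp_odd_eq_half stdNormalPdf_neg stdNormalCdf_add_stdNormalCdf_neg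
    (fun x => mul_neg c x) integrable_stdNormalPdf hi, integral_stdNormalPdf]

lemma integral_comp_linearMap {E F : Type*} [NormedAddCommGroup E] [NormedSpace ℝ E]
    [MeasurableSpace E] [BorelSpace E] [FiniteDimensional ℝ E] (μ : Measure E) [μ.IsAddHaarMeasure]
    [NormedAddCommGroup F] [NormedSpace ℝ F] {L : E →ₗ[ℝ] E} (hL : LinearMap.det L ≠ 0)
    (g : E → F) :
    ∫ x, g (L x) ∂μ = |(LinearMap.det L)⁻¹| • ∫ y, g y ∂μ := by
  have hemb : MeasurableEmbedding L :=
    (L.equivOfDetNeZero hL).toContinuousLinearEquiv.toHomeomorph.measurableEmbedding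
  rw [← hemb.integral_map, Measure.map_linearMap_addHaar_eq_smul_addHaar μ hL,
    integral_smul_measure, ENNReal.toReal_ofReal (abs_nonneg _)]

lemma vec_transpose_mul_mul_transpose {R l m n p : Type*} [NonUnitalCommSemiring R] [Fintype m]
    [Fintype n] (A : Matrix l m R) (X : Matrix m n R) (B : Matrix p n R) :
    vec (A * X * Bᵀ)ᵀ = (A ⊗ₖ B) *ᵥ vec Xᵀ := by
  rw [kronecker_mulVec_vec, transpose_mul, transpose_mul, transpose_transpose, Matrix.mul_assoc]

lemma det_toLin'_kronecker_inv {K m n : Type*} [Field K] [Fintype m] [Fintype n] [DecidableEq m]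
    [DecidableEq n] (A : Matrix m m K) (B : Matrix n n K) :
    LinearMap.det (toLin' (A⁻¹ ⊗ₖ B⁻¹)) = (A.det ^ Fintype.card n * B.det ^ Fintype.card m)⁻¹ := by
  rw [LinearMap.det_toLin', det_kronecker, det_nonsing_inv, det_nonsing_inv, Ring.inverse_eq_inv',
    inv_pow, inv_pow, mul_inv]

lemma integral_pi_prod_stdNormalPdf_mul_stdNormalCdf {ι : Type*} [Fintype ι] (c : ι → ℝ) :
    ∫ y : ι → ℝ, ∏ p, stdNormalPdf (y p) * stdNormalCdf (c p * y p) =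
      (1 / 2) ^ Fintype.card ι := by
  rw [volume_pi, integral_fintype_prod_eq_prod (fun p x => stdNormalPdf x * stdNormalCdf (c p * x))]
  simp only [integral_stdNormalPdf_mul_stdNormalCdf, Finset.prod_const, Finset.card_univ]

/-- The array variate skew normal density integrates to one (i = 2):
with `W = A₁⁻¹(X−M)(A₂⁻¹)ᵀ`,
`∫ |det A₁|^(−n) |det A₂|^(−m) ∏ᵢⱼ φ(Wᵢⱼ) Φ(Δᵢⱼ Wᵢⱼ) dX = 2^(−mn)`. -/
theorem integral_matrixSkewNormal_kernel
    (m n : ℕ)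
    (A₁ : Matrix (Fin m) (Fin m) ℝ) (hA₁ : IsUnit A₁.det)
    (A₂ : Matrix (Fin n) (Fin n) ℝ) (hA₂ : IsUnit A₂.det)
    (M Δ : Matrix (Fin m) (Fin n) ℝ) :
    ∫ X : (Fin m × Fin n) → ℝ,
        |A₁.det| ^ (-(n : ℤ)) * |A₂.det| ^ (-(m : ℤ)) *
          ∏ i : Fin m, ∏ j : Fin n,
            (stdNormalPdf ((A₁⁻¹ * ((Matrix.of fun i j => X (i, j)) - M) * (A₂⁻¹)ᵀ) i j) *
              stdNormalCdf (Δ i j *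
                (A₁⁻¹ * ((Matrix.of fun i j => X (i, j)) - M) * (A₂⁻¹)ᵀ) i j))
      = (2 : ℝ) ^ (-(m * n : ℤ)) := by
  set L := toLin' (A₁⁻¹ ⊗ₖ A₂⁻¹)
  set G : (Fin m × Fin n → ℝ) → ℝ := fun y => ∏ p,
    stdNormalPdf (y p) * stdNormalCdf (vec Δᵀ p * y p)
  have hdet : LinearMap.det L = (A₁.det ^ n * A₂.det ^ m)⁻¹ := by
    simp only [L, det_toLin'_kronecker_inv, Fintype.card_fin]
  have hW : ∀ X i j, (A₁⁻¹ * ((of fun i j => X (i, j)) - M) * (A₂⁻¹)ᵀ) i j =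
      L (X - vec Mᵀ) (i, j) := by
    intro X i j
    show _ = L (vec ((of fun i j => X (i, j)) - M)ᵀ) (i, j)
    rw [toLin'_apply, ← vec_transpose_mul_mul_transpose]
    rfl
  have hG : ∀ X, ∏ i, ∏ j, stdNormalPdf ((A₁⁻¹ * ((of fun i j => X (i, j)) - M) * (A₂⁻¹)ᵀ) i j) *
      stdNormalCdf (Δ i j * (A₁⁻¹ * ((of fun i j => X (i, j)) - M) * (A₂⁻¹)ᵀ) i j) =
      G (L (X - vec Mᵀ)) := by
    intro X
    simp only [hW, Fintype.prod_prod_type, G]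
    rfl
  simp_rw [hG]
  rw [integral_const_mul, integral_sub_right_eq_self fun x => G (L x),
    integral_comp_linearMap volume (by simp [hdet, hA₁.ne_zero, hA₂.ne_zero]) G,
    integral_pi_prod_stdNormalPdf_mul_stdNormalCdf, hdet]
  have h₁ : |A₁.det| ≠ 0 := abs_ne_zero.2 hA₁.ne_zero
  have h₂ : |A₂.det| ≠ 0 := abs_ne_zero.2 hA₂.ne_zero
  simp only [inv_inv, abs_mul, abs_pow, smul_eq_mul, Fintype.card_prod, Fintype.card_fin,
    _root_.zpow_neg, ← Nat.cast_mul, zpow_natCast, one_div, inv_pow]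
  field_simp
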